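/- arXiv:2210.16357 — 4 statements merged into one kernel-verified Lean document; each statement's English description precedes it below -/
import Mathlib

section
/- Let (x_n) be i.i.d. samples from P ∈ P_k(X), and let P_n = (1/n)∑_{i=1}^n δ_{x_i}. Assume H(k) is separable and ∫ √(k(x,x)) dP(x) < ∞. Then μ_k(P_n) → μ_k(P) almost surely in the norm of H(k). -/
/-!
The empirical kernel means are the sample averages of the i.i.d. `H`-valued variables
`Φ (ξ i)`, so this is the strong law of large numbers in the Banach space `H`. Its hypothesis
is Bochner integrability of `Φ`: separability of `H` makes the measurable `Φ` strongly
measurable, and `√(k(x,x)) = ‖Φ x‖`.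
-/

open MeasureTheory Filter

namespace ProbabilityTheory

variable {Ω X E : Type*} [MeasurableSpace Ω] {μ : Measure Ω} [MeasurableSpace X] {P : Measure X}
  [NormedAddCommGroup E] [NormedSpace ℝ E] [CompleteSpace E] [MeasurableSpace E] [BorelSpace E]

theorem strong_law_ae_comp_of_map_eq (ξ : ℕ → Ω → X) (hξ : ∀ i, Measurable (ξ i))
    (hindep : iIndepFun ξ μ) (hdist : ∀ i, μ.map (ξ i) = P)
    {f : X → E} (hf : Measurable f) (hf_int : Integrable f P) :
    ∀ᵐ ω ∂μ, Tendsto (fun n : ℕ => (n : ℝ)⁻¹ • ∑ i ∈ Finset.range n, f (ξ i ω))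
      atTop (nhds (∫ x, f x ∂P)) := by
  have hident : ∀ i, IdentDistrib (fun ω => f (ξ i ω)) (fun ω => f (ξ 0 ω)) μ μ := fun i =>
    (⟨(hξ i).aemeasurable, (hξ 0).aemeasurable, by rw [hdist i, hdist 0]⟩ :
      IdentDistrib (ξ i) (ξ 0) μ μ).comp hf
  have hint : Integrable (fun ω => f (ξ 0 ω)) μ :=
    (hdist 0 ▸ hf_int).comp_measurable (hξ 0)
  have hmean : ∫ ω, f (ξ 0 ω) ∂μ = ∫ x, f x ∂P := by
    rw [← hdist 0, integral_map (hξ 0).aemeasurable (hdist 0 ▸ hf_int.aestronglyMeasurable)]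
  simpa only [hmean] using strong_law_ae (fun i ω => f (ξ i ω)) hint
    (fun i j hij => (hindep.indepFun hij).comp hf hf) hident

end ProbabilityTheory

theorem kernel_mean_strong_consistency_general
    {Ω : Type*} [MeasurableSpace Ω] (μ : Measure Ω)
    {X : Type*} [MeasurableSpace X] (P : Measure X)
    {H : Type*} [NormedAddCommGroup H] [InnerProductSpace ℝ H] [CompleteSpace H]
    [MeasurableSpace H] [BorelSpace H] [TopologicalSpace.SeparableSpace H]
    (Φ : X → H) (hΦ : Measurable Φ)
    (ξ : ℕ → Ω → X) (hmeas : ∀ i, Measurable (ξ i))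
    (hindep : ProbabilityTheory.iIndepFun ξ μ)
    (hdist : ∀ i, Measure.map (ξ i) μ = P)
    (hint : Integrable (fun x => Real.sqrt (inner ℝ (Φ x) (Φ x) : ℝ)) P) :
    ∀ᵐ ω ∂μ, Tendsto (fun n : ℕ => (n : ℝ)⁻¹ • ∑ i ∈ Finset.range n, Φ (ξ i ω))
      atTop (nhds (∫ x, Φ x ∂P)) := by
  have hΦ_int : Integrable Φ P := by
    refine (integrable_norm_iff hΦ.aestronglyMeasurable).1 ?_
    simpa only [← norm_eq_sqrt_real_inner] using hint
  exact ProbabilityTheory.strong_law_ae_comp_of_map_eq ξ hmeas hindep hdist hΦ hΦ_int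

/-- Strong consistency of the kernel mean element.  For i.i.d. samples
`ξ i` with law `P ∈ P_k(X)`, a separable RKHS `H(k)` (modelled by a separable Hilbert
space `H` with feature map `Φ`, so `k(x,x) = ‖Φ x‖²`), and
`∫ √(k(x,x)) dP(x) < ∞`, the empirical kernel mean `μ_k(P_n) = (1/n) ∑ Φ(ξ i)`
converges almost surely in `H(k)`-norm to `μ_k(P) = ∫ Φ dP`. -/
theorem kernel_mean_strong_consistency
    {Ω : Type*} [MeasurableSpace Ω] (μ : Measure Ω) [IsProbabilityMeasure μ]
    {X : Type*} [MeasurableSpace X] (P : Measure X) [IsProbabilityMeasure P]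
    {H : Type*} [NormedAddCommGroup H] [InnerProductSpace ℝ H] [CompleteSpace H]
    [MeasurableSpace H] [BorelSpace H] [TopologicalSpace.SeparableSpace H]
    (Φ : X → H) (hΦ : Measurable Φ)
    (ξ : ℕ → Ω → X) (hmeas : ∀ i, Measurable (ξ i))
    (hindep : ProbabilityTheory.iIndepFun ξ μ)
    (hdist : ∀ i, Measure.map (ξ i) μ = P)
    (hint : Integrable (fun x => Real.sqrt (inner ℝ (Φ x) (Φ x) : ℝ)) P) :
    ∀ᵐ ω ∂μ, Tendsto (fun n : ℕ => (n : ℝ)⁻¹ • ∑ i ∈ Finset.range n, Φ (ξ i ω))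
      atTop (nhds (∫ x, Φ x ∂P)) :=
  kernel_mean_strong_consistency_general μ P Φ hΦ ξ hmeas hindep hdist hint
end

section
/- Under the assumptions that H(k) is separable and ∫ √(k(x,x)) dP(x) < ∞, the empirical kernel discrepancy converges uniformly over the model: sup_{θ∈Θ} |D_k(P_n, P_θ) - D_k(P, P_θ)| → 0 almost surely. -/
/-!
By the reverse triangle inequality, `|D_k(P_n, P_θ) - D_k(P, P_θ)| ≤ ‖μ_k(P_n) - μ_k(P)‖` for
every `θ`, and the right-hand side does not depend on `θ`. It tends to `0` almost surely by the
strong law of large numbers in the Hilbert space `H(k)`, applied to the i.i.d. features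
`Φ (ξ i)`, which are Bochner integrable because `‖Φ x‖ = √k(x,x)`.
-/

open MeasureTheory Filter ProbabilityTheory Topology Function
open scoped InnerProductSpace

theorem integrable_of_integrable_sqrt_inner_self {X H : Type*} [MeasurableSpace X]
    [NormedAddCommGroup H] [InnerProductSpace ℝ H] {P : Measure X} {Φ : X → H}
    (hΦ : AEStronglyMeasurable Φ P) (h : Integrable (fun x => √(⟪Φ x, Φ x⟫_ℝ)) P) :
    Integrable Φ P :=
  (integrable_norm_iff hΦ).1 (by simpa only [← norm_eq_sqrt_real_inner] using h)

theorem strong_law_ae_comp {Ω X E : Type*} [MeasurableSpace Ω]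
    [MeasurableSpace X] [NormedAddCommGroup E] [NormedSpace ℝ E] [CompleteSpace E]
    [MeasurableSpace E] [BorelSpace E] {μ : Measure Ω} {P : Measure X} {Φ : X → E}
    (hΦ : Measurable Φ) (hΦP : Integrable Φ P) {ξ : ℕ → Ω → X} (hξ : ∀ i, Measurable (ξ i))
    (hindep : Pairwise ((· ⟂ᵢ[μ] ·) on ξ)) (hdist : ∀ i, μ.map (ξ i) = P) :
    ∀ᵐ ω ∂μ, Tendsto (fun n : ℕ => (n : ℝ)⁻¹ • ∑ i ∈ Finset.range n, Φ (ξ i ω)) atTop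
      (𝓝 (∫ x, Φ x ∂P)) := by
  have hident : ∀ i, IdentDistrib (Φ ∘ ξ i) (Φ ∘ ξ 0) μ μ := fun i =>
    (IdentDistrib.mk (hξ i).aemeasurable (hξ 0).aemeasurable (by rw [hdist, hdist])).comp hΦ
  rw [← hdist 0] at hΦP
  have hint : Integrable (Φ ∘ ξ 0) μ :=
    (integrable_map_measure hΦP.aestronglyMeasurable (hξ 0).aemeasurable).1 hΦP
  have hmean : ∫ ω, Φ (ξ 0 ω) ∂μ = ∫ x, Φ x ∂P := by
    rw [← hdist 0, integral_map (hξ 0).aemeasurable hΦP.aestronglyMeasurable]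
  simpa only [hmean, comp_apply] using
    strong_law_ae (fun i => Φ ∘ ξ i) hint (fun i j hij => (hindep hij).comp hΦ hΦ) hident

theorem tendstoUniformly_norm_sub_of_tendsto {ι Θ E : Type*} [SeminormedAddCommGroup E]
    {l : Filter ι} {u : ι → E} {a : E} (h : Tendsto u l (𝓝 a)) (c : Θ → E) :
    TendstoUniformly (fun n θ => ‖u n - c θ‖) (fun θ => ‖a - c θ‖) l := by
  rw [Metric.tendstoUniformly_iff]
  intro ε hε
  filter_upwards [Metric.tendsto_nhds.1 h ε hε] with n hn θ
  calc dist ‖a - c θ‖ ‖u n - c θ‖ ≤ ‖(a - c θ) - (u n - c θ)‖ := dist_norm_norm_le _ _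
    _ = dist (u n) a := by rw [sub_sub_sub_cancel_right, ← dist_eq_norm, dist_comm]
    _ < ε := hn

theorem uniform_convergence_in_discrepancy_general
    {Ω : Type*} [MeasurableSpace Ω] (μ : Measure Ω)
    {X : Type*} [MeasurableSpace X] (P : Measure X)
    {H : Type*} [NormedAddCommGroup H] [InnerProductSpace ℝ H] [CompleteSpace H]
    [MeasurableSpace H] [BorelSpace H] [TopologicalSpace.SeparableSpace H]
    (Φ : X → H) (hΦ : Measurable Φ)
    {Θ : Type*} (Pmod : Θ → Measure X)
    (ξ : ℕ → Ω → X) (hmeas : ∀ i, Measurable (ξ i))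
    (hindep : ProbabilityTheory.iIndepFun (m := fun _ => inferInstance) ξ μ)
    (hdist : ∀ i, Measure.map (ξ i) μ = P)
    (hint : Integrable (fun x => Real.sqrt (inner ℝ (Φ x) (Φ x) : ℝ)) P) :
    ∀ᵐ ω ∂μ, TendstoUniformly
      (fun (n : ℕ) (θ : Θ) =>
        ‖((n : ℝ)⁻¹ • ∑ i ∈ Finset.range n, Φ (ξ i ω)) - ∫ x, Φ x ∂(Pmod θ)‖)
      (fun θ => ‖(∫ x, Φ x ∂P) - ∫ x, Φ x ∂(Pmod θ)‖) atTop := by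
  have hΦP : Integrable Φ P :=
    integrable_of_integrable_sqrt_inner_self hΦ.aestronglyMeasurable hint
  filter_upwards [strong_law_ae_comp hΦ hΦP hmeas
    (fun i j hij => hindep.indepFun hij) hdist] with ω hω
  exact tendstoUniformly_norm_sub_of_tendsto hω fun θ => ∫ x, Φ x ∂Pmod θ

/-- Uniform convergence in discrepancy.  With `H(k)` separable and
`∫ √(k(x,x)) dP(x) < ∞`, for any statistical model `{P_θ}_{θ∈Θ} ⊂ P_k(X)` the
empirical kernel discrepancy `D_k(P_n, P_θ) = ‖μ_k(P_n) - μ_k(P_θ)‖` converges to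
`D_k(P, P_θ)` almost surely, uniformly over `θ ∈ Θ` (i.e.
`sup_θ |D_k(P_n,P_θ) - D_k(P,P_θ)| → 0` a.s.). -/
theorem uniform_convergence_in_discrepancy
    {Ω : Type*} [MeasurableSpace Ω] (μ : Measure Ω) [IsProbabilityMeasure μ]
    {X : Type*} [MeasurableSpace X] (P : Measure X) [IsProbabilityMeasure P]
    {H : Type*} [NormedAddCommGroup H] [InnerProductSpace ℝ H] [CompleteSpace H]
    [MeasurableSpace H] [BorelSpace H] [TopologicalSpace.SeparableSpace H]
    (Φ : X → H) (hΦ : Measurable Φ)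
    {Θ : Type*} (Pmod : Θ → Measure X) [∀ θ, IsProbabilityMeasure (Pmod θ)]
    (hmod : ∀ θ, Integrable Φ (Pmod θ))
    (ξ : ℕ → Ω → X) (hmeas : ∀ i, Measurable (ξ i))
    (hindep : ProbabilityTheory.iIndepFun (m := fun _ => inferInstance) ξ μ)
    (hdist : ∀ i, Measure.map (ξ i) μ = P)
    (hint : Integrable (fun x => Real.sqrt (inner ℝ (Φ x) (Φ x) : ℝ)) P) :
    ∀ᵐ ω ∂μ, TendstoUniformly
      (fun (n : ℕ) (θ : Θ) =>
        ‖((n : ℝ)⁻¹ • ∑ i ∈ Finset.range n, Φ (ξ i ω)) - ∫ x, Φ x ∂(Pmod θ)‖)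
      (fun θ => ‖(∫ x, Φ x ∂P) - ∫ x, Φ x ∂(Pmod θ)‖) atTop :=
  uniform_convergence_in_discrepancy_general μ P Φ hΦ Pmod ξ hmeas hindep hdist hint
end

section
/- Let Θ be a topological space, f, f_n : Θ → ℝ with sup_θ |f_n(θ) - f(θ)| → 0, and suppose for some ε > 0 the closure C of {θ ∈ Θ : f(θ) < ε + inf_ϑ f(ϑ)} is sequentially compact. If θ_n minimises f_n for each n, then the sequence (θ_n) is eventually contained in C and has at least one accumulation point. -/
/-!
Once `F n` is uniformly `ε / 3`-close to `f`, a minimiser of `F n` is an `ε`-minimiser of `f`, so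
`θ n` eventually lies in `C`; sequential compactness of `C` then yields a convergent subsequence.
-/

open Filter

theorem apply_le_add_of_forall_abs_sub_lt {α : Type*} {F f : α → ℝ} {x : α} {η : ℝ}
    (hmin : ∀ y, F x ≤ F y) (hclose : ∀ y, |f y - F y| < η) (y : α) :
    f x ≤ f y + 2 * η := by
  have hx := abs_lt.mp (hclose x)
  have hy := abs_lt.mp (hclose y)
  linarith [hmin y]

theorem TendstoUniformly.eventually_apply_lt_iInf_add {α ι : Type*} {l : Filter ι}
    {F : ι → α → ℝ} {f : α → ℝ} (hunif : TendstoUniformly F f l) {x : ι → α}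
    (hmin : ∀ i y, F i (x i) ≤ F i y) {δ : ℝ} (hδ : 0 < δ) :
    ∀ᶠ i in l, f (x i) < δ + ⨅ y, f y := by
  filter_upwards [Metric.tendstoUniformly_iff.mp hunif (δ / 3) (by positivity)] with i hi
  have : Nonempty α := ⟨x i⟩
  have hle : f (x i) - 2 * (δ / 3) ≤ ⨅ y, f y :=
    le_ciInf fun y => sub_le_iff_le_add.mpr <|
      apply_le_add_of_forall_abs_sub_lt (hmin i) (fun y => by simpa [Real.dist_eq] using hi y) y
  linarith

theorem minimisers_have_accumulation_point_general
    {Θ : Type*} [TopologicalSpace Θ]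
    (f : Θ → ℝ) (fn : ℕ → Θ → ℝ)
    (ε : ℝ) (hε : 0 < ε)
    (C : Set Θ) (hC : C = closure {θ | f θ < ε + ⨅ ϑ, f ϑ})
    (hcomp : IsSeqCompact C)
    (hunif : TendstoUniformly fn f atTop)
    (θn : ℕ → Θ) (hmin : ∀ n θ, fn n (θn n) ≤ fn n θ) :
    (∀ᶠ n in atTop, θn n ∈ C) ∧
      ∃ θstar ∈ C, ∃ φ : ℕ → ℕ, StrictMono φ ∧
        Tendsto (θn ∘ φ) atTop (nhds θstar) := by
  have hmemC : ∀ᶠ n in atTop, θn n ∈ C :=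
    (hunif.eventually_apply_lt_iInf_add hmin hε).mono fun _ hn => hC ▸ subset_closure hn
  exact ⟨hmemC, hcomp.subseq_of_frequently_in hmemC.frequently⟩

/-- If `sup_θ |f_n(θ) - f(θ)| → 0`, `f` is bounded below, and for some
`ε > 0` the closure `C` of `{θ : f(θ) < ε + inf_ϑ f(ϑ)}` is sequentially compact, then
any sequence `(θ_n)` of minimisers of `f_n` is eventually contained in `C` and has at
least one accumulation point. -/
theorem minimisers_have_accumulation_point
    {Θ : Type*} [TopologicalSpace Θ] [Nonempty Θ]
    (f : Θ → ℝ) (fn : ℕ → Θ → ℝ)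
    (hbdd : BddBelow (Set.range f))
    (ε : ℝ) (hε : 0 < ε)
    (C : Set Θ) (hC : C = closure {θ | f θ < ε + ⨅ ϑ, f ϑ})
    (hcomp : IsSeqCompact C)
    (hunif : TendstoUniformly fn f atTop)
    (θn : ℕ → Θ) (hmin : ∀ n θ, fn n (θn n) ≤ fn n θ) :
    (∀ᶠ n in atTop, θn n ∈ C) ∧
      ∃ θstar ∈ C, ∃ φ : ℕ → ℕ, StrictMono φ ∧
        Tendsto (θn ∘ φ) atTop (nhds θstar) :=
  minimisers_have_accumulation_point_general f fn ε hε C hC hcomp hunif θn hmin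
end

section
/- Let Θ ⊂ ℝ^p be bounded, f : Θ → ℝ fixed, and (f_n) a sequence of random functions f_n : Θ → ℝ such that (i) f_n(θ) → f(θ) almost surely for each θ ∈ Θ, and (ii) |f_n(θ) - f_n(ϑ)| ≤ B_n ‖θ - ϑ‖ for all θ, ϑ ∈ Θ where B_n does not depend on θ, ϑ and almost surely limsup B_n < ∞. Then sup_{θ∈Θ} |f_n(θ) - f(θ)| → 0 almost surely. -/
/-!
Along a countable dense set `D ⊆ Θ` the pointwise convergence holds simultaneously almost surely,
and `limsup B_n < ∞` makes the `f_n(ω)` eventually equi-Lipschitz on `Θ`. As `Θ` is totally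
bounded, a finite net taken inside `D` shows that `f_n(ω)` is uniformly Cauchy on `Θ`, so it
converges uniformly to a continuous `g_ω` with `g_ω = f` on `D`. By density any two such limits
agree on `Θ`; and for each `θ` some good `ω'` also satisfies `f_n(ω')(θ) → f(θ)`, whence
`g_ω(θ) = g_ω'(θ) = f(θ)` although `f` itself need not be continuous.
-/

open MeasureTheory Filter Metric Set Topology NNReal

theorem exists_finite_subset_forall_dist_lt_of_totallyBounded {α : Type*} [PseudoMetricSpace α]
    {s D : Set α} (hD : TotallyBounded D) (hsD : s ⊆ closure D) {δ : ℝ} (hδ : 0 < δ) :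
    ∃ T ⊆ D, T.Finite ∧ ∀ x ∈ s, ∃ t ∈ T, dist x t < δ := by
  obtain ⟨T, hTD, hTfin, hDT⟩ := finite_approx_of_totallyBounded hD (δ / 2) (half_pos hδ)
  refine ⟨T, hTD, hTfin, fun x hx => ?_⟩
  obtain ⟨d, hd, hxd⟩ := Metric.mem_closure_iff.1 (hsD hx) (δ / 2) (half_pos hδ)
  obtain ⟨t, ht, hdt⟩ := mem_iUnion₂.1 (hDT hd)
  exact ⟨t, ht, by linarith [dist_triangle x d t, mem_ball.1 hdt]⟩

theorem uniformCauchySeqOn_of_eventually_lipschitzOnWith {α β : Type*} [PseudoMetricSpace α]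
    [PseudoMetricSpace β] {F : ℕ → α → β} {s D : Set α} {K : ℝ≥0} (hs : TotallyBounded s)
    (hDs : D ⊆ s) (hsD : s ⊆ closure D) (hF : ∀ᶠ n in atTop, LipschitzOnWith K (F n) s)
    (hD : ∀ d ∈ D, CauchySeq fun n => F n d) :
    UniformCauchySeqOn F atTop s := by
  intro u hu
  obtain ⟨ε, hε, hεu⟩ := mem_uniformity_dist.1 hu
  obtain ⟨δ, hδ, hKδ⟩ := exists_pos_mul_lt (by positivity : 0 < ε / 3) K
  obtain ⟨T, hTD, hTfin, hnet⟩ :=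
    exists_finite_subset_forall_dist_lt_of_totallyBounded (hs.subset hDs) hsD hδ
  have hT : ∀ t ∈ T, ∀ᶠ mn in atTop ×ˢ atTop, dist (F mn.1 t) (F mn.2 t) < ε / 3 := fun t ht =>
    ((cauchySeq_iff_tendsto.1 (hD t (hTD ht))).eventually
      (dist_mem_uniformity (by positivity))).filter_mono prod_atTop_atTop_eq.le
  filter_upwards [hF.prod_inl atTop, hF.prod_inr atTop, (eventually_all_finite hTfin).2 hT]
    with mn hm hn hmn x hx
  obtain ⟨t, ht, hxt⟩ := hnet x hx
  have htx : dist t x < δ := dist_comm x t ▸ hxt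
  have h₁ := (hm.dist_le_mul x hx t (hDs (hTD ht))).trans (by gcongr : (K : ℝ) * dist x t ≤ K * δ)
  have h₂ := (hn.dist_le_mul t (hDs (hTD ht)) x hx).trans (by gcongr : (K : ℝ) * dist t x ≤ K * δ)
  apply hεu
  calc dist (F mn.1 x) (F mn.2 x)
      ≤ dist (F mn.1 x) (F mn.1 t) + dist (F mn.1 t) (F mn.2 t) + dist (F mn.2 t) (F mn.2 x) :=
        dist_triangle4 _ _ _ _
    _ < ε := by linarith [hmn t ht]

theorem exists_continuousOn_tendstoUniformlyOn_of_eventually_lipschitzOnWith {α β : Type*}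
    [PseudoMetricSpace α] [MetricSpace β] [CompleteSpace β] {F : ℕ → α → β} {f : α → β}
    {s D : Set α} {K : ℝ≥0} (hs : TotallyBounded s) (hDs : D ⊆ s) (hsD : s ⊆ closure D)
    (hF : ∀ᶠ n in atTop, LipschitzOnWith K (F n) s)
    (hD : ∀ d ∈ D, Tendsto (fun n => F n d) atTop (𝓝 (f d))) :
    ∃ g, ContinuousOn g s ∧ EqOn g f D ∧ TendstoUniformlyOn F g atTop s := by
  have hF' := uniformCauchySeqOn_of_eventually_lipschitzOnWith hs hDs hsD hF
    fun d hd => (hD d hd).cauchySeq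
  -- off `s` the limit is irrelevant; `f x` only supplies a point of `β`
  have hlim : ∀ x, ∃ y, x ∈ s → Tendsto (fun n => F n x) atTop (𝓝 y) := by
    intro x
    by_cases hx : x ∈ s
    · exact (cauchySeq_tendsto_of_complete (hF'.cauchySeq hx)).imp fun _ h _ => h
    · exact ⟨f x, fun h => absurd h hx⟩
  choose g hg using hlim
  replace hg : TendstoUniformlyOn F g atTop s := hF'.tendstoUniformlyOn_of_tendsto hg
  exact ⟨g, hg.continuousOn (hF.frequently.mono fun n hn => hn.continuousOn),
    fun d hd => tendsto_nhds_unique (hg.tendsto_at (hDs hd)) (hD d hd), hg⟩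

/-- Uniform law of large numbers.  Let `Θ ⊂ ℝ^p` be bounded, `f` fixed,
and `(f_n)` random functions with (i) `f_n(θ) → f(θ)` a.s. for each `θ ∈ Θ`, and
(ii) `|f_n(θ) - f_n(ϑ)| ≤ B_n ‖θ - ϑ‖` on `Θ`, where a.s. `limsup B_n < ∞` (the
sequence `B_n` is eventually bounded).  Then `sup_{θ∈Θ} |f_n(θ) - f(θ)| → 0` a.s. -/
theorem uniform_law_of_large_numbers
    {Ω : Type*} [MeasurableSpace Ω] (μ : Measure Ω) [IsProbabilityMeasure μ]
    {p : ℕ} (Θ : Set (EuclideanSpace ℝ (Fin p))) (hΘ : Bornology.IsBounded Θ)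
    (f : EuclideanSpace ℝ (Fin p) → ℝ)
    (fn : ℕ → Ω → EuclideanSpace ℝ (Fin p) → ℝ)
    (B : ℕ → Ω → ℝ)
    (hpt : ∀ θ ∈ Θ, ∀ᵐ ω ∂μ, Tendsto (fun n => fn n ω θ) atTop (nhds (f θ)))
    (hlip : ∀ n ω, ∀ θ ∈ Θ, ∀ ϑ ∈ Θ, |fn n ω θ - fn n ω ϑ| ≤ B n ω * ‖θ - ϑ‖)
    (hB : ∀ᵐ ω ∂μ, IsBoundedUnder (· ≤ ·) atTop (fun n => B n ω)) :
    ∀ᵐ ω ∂μ, TendstoUniformlyOn (fun n θ => fn n ω θ) f atTop Θ := by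
  obtain ⟨D, hDΘ, hDc, hΘD⟩ :=
    (TopologicalSpace.IsSeparable.of_separableSpace Θ).exists_countable_dense_subset
  have hΘtb : TotallyBounded Θ := hΘ.isCompact_closure.totallyBounded.subset subset_closure
  have hgood : ∀ᵐ ω ∂μ, ∃ g, ContinuousOn g Θ ∧ EqOn g f D ∧
      TendstoUniformlyOn (fun n θ => fn n ω θ) g atTop Θ := by
    filter_upwards [(ae_ball_iff hDc).2 fun d hd => hpt d (hDΘ hd), hB] with ω hD ⟨C, hC⟩
    refine exists_continuousOn_tendstoUniformlyOn_of_eventually_lipschitzOnWith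
      (K := C.toNNReal) hΘtb hDΘ hΘD ((eventually_map.1 hC).mono fun n hn => ?_) hD
    refine LipschitzOnWith.of_dist_le' fun θ hθ ϑ hϑ => ?_
    rw [Real.dist_eq, dist_eq_norm]
    exact (hlip n ω θ hθ ϑ hϑ).trans (by gcongr)
  filter_upwards [hgood] with ω ⟨g, hgc, hgD, hg⟩
  refine hg.congr_right fun θ hθ => ?_
  obtain ⟨ω₁, ⟨g₁, hg₁c, hg₁D, hg₁⟩, hθ₁⟩ := (hgood.and (hpt θ hθ)).exists
  calc g θ = g₁ θ := (hgD.trans hg₁D.symm).of_subset_closure hgc hg₁c hDΘ hΘD hθ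
    _ = f θ := tendsto_nhds_unique (hg₁.tendsto_at hθ) hθ₁
end
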